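/- arXiv:2604.08642 — 2 statements merged into one kernel-verified Lean document; each statement's English description precedes it below -/
import Mathlib

section
/- Let K be a field of characteristic zero and let K = R₀ ⊆ R₁ ⊆ … ⊆ Rₙ be a chain of radical extensions, where for each i the field Rᵢ = R_{i−1}(aᵢ) with aᵢ^{kᵢ} ∈ R_{i−1} for some natural number kᵢ. Then there exists a normalization of this chain: a nested set of normal radical extensions K = E₀ ⊆ K_u = E₁ ⊆ E₂ ⊆ … ⊆ E_{n+1} such that (1) E₁ is the splitting field over K of the polynomial x^N − 1, where N is the least common multiple of the characteristic degrees k₁, …, kₙ; (2) for each i = 1, …, n the inclusion Rᵢ ⊆ E_{i+1} holds; (3) each E_{i+1} is a normal extension of K and is the splitting field over Eᵢ of a polynomial of the form ∏_m (x^{k_i} − ω_m) with all ω_m ∈ Eᵢ. -/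
/-!
Put `E₁ = K(μ_N)` and let `E_{i+1}` be `Eᵢ` with all `kᵢ`-th roots of all `K`-conjugates of
`aᵢ^{kᵢ}` adjoined, i.e. the roots of `minpoly K (aᵢ^{kᵢ}) (X^{kᵢ})`. Each step adjoins the roots
of a polynomial over `K`, so every `Eᵢ` is normal over `K`, hence Galois in characteristic zero,
and `Rᵢ ⊆ E_{i+1}` by induction. As `Eᵢ` is normal and contains `aᵢ^{kᵢ}`, the minimal polynomial
of `aᵢ^{kᵢ}` splits over `Eᵢ` as `∏ (X - ω)`, and the roots of `∏ (X^{kᵢ} - ω)` are exactly the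
adjoined ones, so `E_{i+1}` is its splitting field over `Eᵢ`.
-/

open Polynomial IntermediateField

section RootSet

variable {K F Ω : Type*} [Field K] [Field F] [Field Ω] [Algebra K F] [Algebra K Ω] [Algebra F Ω]
  [IsScalarTower K F Ω]

theorem mem_rootSet_expand_iff {p : K[X]} (hp : p ≠ 0) {k : ℕ} (hk : 0 < k) {x : Ω} :
    x ∈ (expand K k p).rootSet Ω ↔ x ^ k ∈ p.rootSet Ω := by
  simp [mem_rootSet, expand_eq_zero hk, hp, expand_aeval]

theorem mem_rootSet_expand_minpoly {x : Ω} {k : ℕ} (hx : IsIntegral K (x ^ k)) (hk : 0 < k) :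
    x ∈ (expand K k (minpoly K (x ^ k))).rootSet Ω :=
  (mem_rootSet_expand_iff (minpoly.ne_zero hx) hk).mpr
    (mem_rootSet.mpr ⟨minpoly.ne_zero hx, minpoly.aeval K _⟩)

theorem rootSet_prod_X_pow_sub_C_aroots [DecidableEq F] {p : K[X]} (hp : p ≠ 0)
    (hsplit : (p.map (algebraMap K F)).Splits) {k : ℕ} (hk : 0 < k) :
    (∏ ω ∈ (p.aroots F).toFinset, (X ^ k - C ω)).rootSet Ω = (expand K k p).rootSet Ω := by
  have hP : ∏ ω ∈ (p.aroots F).toFinset, (X ^ k - C ω) ≠ 0 :=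
    (monic_prod_of_monic _ _ fun ω _ => monic_X_pow_sub_C ω hk.ne').ne_zero
  ext x
  rw [mem_rootSet_expand_iff hp hk, ← hsplit.image_rootSet (IsScalarTower.toAlgHom K F Ω),
    mem_rootSet_of_ne hP]
  simp only [map_prod, map_sub, map_pow, aeval_X, aeval_C, Finset.prod_eq_zero_iff, sub_eq_zero,
    rootSet_def, Finset.mem_coe, Set.mem_image, IsScalarTower.coe_toAlgHom']
  exact exists_congr fun ω => and_congr_right fun _ => eq_comm

end RootSet

section AlgClosed

variable {K Ω : Type*} [Field K] [Field Ω] [Algebra K Ω] [IsAlgClosed Ω]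

theorem isSplittingField_prod_X_pow_sub_C_aroots {F L : IntermediateField K Ω} [DecidableEq F]
    {p : K[X]} (hp : p ≠ 0) (hsplit : (p.map (algebraMap K F)).Splits) {k : ℕ} (hk : 0 < k)
    (hL : L = F ⊔ adjoin K ((expand K k p).rootSet Ω)) (hle : F ≤ L) :
    IsSplittingField F (extendScalars hle) (∏ ω ∈ (p.aroots F).toFinset, (X ^ k - C ω)) := by
  have hadjoin : adjoin F ((∏ ω ∈ (p.aroots F).toFinset, (X ^ k - C ω)).rootSet Ω) =
      extendScalars hle := by
    apply restrictScalars_injective K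
    rw [extendScalars_restrictScalars, restrictScalars_adjoin_eq_sup,
      rootSet_prod_X_pow_sub_C_aroots hp hsplit hk, hL]
  exact hadjoin ▸ adjoin_rootSet_isSplittingField (IsAlgClosed.splits _)

instance normal_adjoin_rootSet (p : K[X]) : Normal K (adjoin K (p.rootSet Ω)) :=
  Normal.of_isSplittingField (hFEp := adjoin_rootSet_isSplittingField (IsAlgClosed.splits _))

end AlgClosed

section RadicalChain

variable {K Ω : Type*} [Field K] [Field Ω] [Algebra K Ω]

theorem radicalChain_le_algebraicClosure {n : ℕ} {R : ℕ → IntermediateField K Ω} {a : ℕ → Ω}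
    {k : ℕ → ℕ} (hR0 : R 0 = ⊥) (hk : ∀ i, 1 ≤ i → i ≤ n → 0 < k i)
    (hstep : ∀ i, 1 ≤ i → i ≤ n → R i = R (i - 1) ⊔ adjoin K {a i})
    (hrad : ∀ i, 1 ≤ i → i ≤ n → a i ^ k i ∈ R (i - 1)) :
    ∀ i ≤ n, R i ≤ algebraicClosure K Ω
  | 0, _ => hR0 ▸ bot_le
  | i + 1, hi => by
    have ih := radicalChain_le_algebraicClosure hR0 hk hstep hrad i (by omega)
    rw [hstep (i + 1) (by omega) hi, sup_le_iff, adjoin_simple_le_iff]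
    exact ⟨ih, (ih (hrad (i + 1) (by omega) hi)).of_pow (hk (i + 1) (by omega) hi)⟩

variable (K) in
noncomputable def normalizationTower (N : ℕ) (a : ℕ → Ω) (k : ℕ → ℕ) :
    ℕ → IntermediateField K Ω
  | 0 => ⊥
  | 1 => adjoin K ((X ^ N - 1 : K[X]).rootSet Ω)
  | i + 2 => normalizationTower N a k (i + 1) ⊔
      adjoin K ((expand K (k (i + 1)) (minpoly K (a (i + 1) ^ k (i + 1)))).rootSet Ω)

theorem normalizationTower_monotone (N : ℕ) (a : ℕ → Ω) (k : ℕ → ℕ) :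
    Monotone (normalizationTower K N a k) :=
  monotone_nat_of_le_succ fun
    | 0 => bot_le
    | _ + 1 => le_sup_left

instance normalizationTower.normal [IsAlgClosed Ω] (N : ℕ) (a : ℕ → Ω) (k : ℕ → ℕ) :
    ∀ i, Normal K (normalizationTower K N a k i)
  | 0 => inferInstanceAs (Normal K (⊥ : IntermediateField K Ω))
  | 1 => normal_adjoin_rootSet _
  | i + 2 =>
    have := normalizationTower.normal N a k (i + 1)
    normal_sup K Ω _ _

theorem radicalChain_le_normalizationTower (N : ℕ) {n : ℕ} {R : ℕ → IntermediateField K Ω}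
    {a : ℕ → Ω} {k : ℕ → ℕ} (hR0 : R 0 = ⊥) (hk : ∀ i, 1 ≤ i → i ≤ n → 0 < k i)
    (hstep : ∀ i, 1 ≤ i → i ≤ n → R i = R (i - 1) ⊔ adjoin K {a i})
    (hint : ∀ i, 1 ≤ i → i ≤ n → IsIntegral K (a i ^ k i)) :
    ∀ i ≤ n, R i ≤ normalizationTower K N a k (i + 1)
  | 0, _ => hR0 ▸ bot_le
  | i + 1, hi => by
    rw [hstep (i + 1) (by omega) hi]
    refine sup_le_sup (radicalChain_le_normalizationTower N hR0 hk hstep hint i (by omega)) ?_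
    rw [adjoin_simple_le_iff]
    exact subset_adjoin K _
      (mem_rootSet_expand_minpoly (hint _ (by omega) hi) (hk _ (by omega) hi))

end RadicalChain

/-- (Normalization of a chain of radical extensions.)  Let `K` be a field
of characteristic zero and let `K = R₀ ⊆ R₁ ⊆ … ⊆ Rₙ` be a chain of radical extensions
(inside an algebraically closed extension `Ω` of `K`): `Rᵢ = R_{i-1}(aᵢ)` with
`aᵢ^{kᵢ} ∈ R_{i-1}`.  Then there exists a normalization of this chain: a nested set of
normal radical extensions `K = E₀ ⊆ K_u = E₁ ⊆ … ⊆ E_{n+1}` such that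
(1) `E₁` is the splitting field over `K` of `x^N - 1`, where `N = lcm(k₁, …, kₙ)`;
(2) `Rᵢ ⊆ E_{i+1}` for `i = 1, …, n`;
(3) every `Eᵢ` is a normal (finite Galois) extension of `K`, and for `i = 1, …, n` the
field `E_{i+1}` is the splitting field over `Eᵢ` of a polynomial of the form
`∏_m (x^{kᵢ} - ω_m)` with all `ω_m ∈ Eᵢ`. -/
theorem normalization_of_radical_chain
    (K Ω : Type) [Field K] [CharZero K] [Field Ω] [Algebra K Ω] [IsAlgClosed Ω]
    (n : ℕ) (R : ℕ → IntermediateField K Ω) (a : ℕ → Ω) (k : ℕ → ℕ)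
    (hR0 : R 0 = ⊥)
    (hk : ∀ i, 1 ≤ i → i ≤ n → 0 < k i)
    (hstep : ∀ i, 1 ≤ i → i ≤ n → R i = R (i - 1) ⊔ IntermediateField.adjoin K {a i})
    (hrad : ∀ i, 1 ≤ i → i ≤ n → a i ^ k i ∈ R (i - 1)) :
    ∃ E : ℕ → IntermediateField K Ω,
      E 0 = ⊥ ∧
      (∀ i j, i ≤ j → j ≤ n + 1 → E i ≤ E j) ∧
      Polynomial.IsSplittingField K (E 1)
        ((Polynomial.X : Polynomial K) ^ ((Finset.Icc 1 n).lcm k) - 1) ∧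
      (∀ i, 1 ≤ i → i ≤ n → R i ≤ E (i + 1)) ∧
      (∀ i, i ≤ n + 1 → IsGalois K (E i)) ∧
      (∀ i, 1 ≤ i → i ≤ n →
        ∃ (s : Finset (E i)) (hle : E i ≤ E (i + 1)),
          Polynomial.IsSplittingField (E i) (IntermediateField.extendScalars hle)
            (∏ ω ∈ s, ((Polynomial.X : Polynomial (E i)) ^ k i - Polynomial.C ω))) := by
  classical
  set E := normalizationTower K ((Finset.Icc 1 n).lcm k) a k
  have hint : ∀ i, 1 ≤ i → i ≤ n → IsIntegral K (a i ^ k i) := fun i hi hin =>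
    radicalChain_le_algebraicClosure hR0 hk hstep hrad (i - 1) (by omega) (hrad i hi hin)
  have hRE := radicalChain_le_normalizationTower ((Finset.Icc 1 n).lcm k) hR0 hk hstep hint
  refine ⟨E, rfl, fun i j hij _ => normalizationTower_monotone _ _ _ hij,
    adjoin_rootSet_isSplittingField (IsAlgClosed.splits _), fun i _ hi => hRE i hi,
    fun i _ => isGalois_iff.mpr ⟨inferInstance, inferInstance⟩, ?_⟩
  intro i hi hin
  obtain ⟨j, rfl⟩ := Nat.exists_eq_add_of_le' hi
  have hc : a (j + 1) ^ k (j + 1) ∈ E (j + 1) := hRE j (by omega) (hrad (j + 1) hi hin)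
  have hsplit : ((minpoly K (a (j + 1) ^ k (j + 1))).map (algebraMap K (E (j + 1)))).Splits :=
    minpoly_eq (⟨_, hc⟩ : E (j + 1)) ▸ Normal.splits' (⟨_, hc⟩ : E (j + 1))
  exact ⟨_, normalizationTower_monotone _ _ _ (Nat.le_succ _),
    isSplittingField_prod_X_pow_sub_C_aroots (minpoly.ne_zero (hint _ hi hin)) hsplit
      (hk _ hi hin) rfl _⟩
end

section
/- Let K be a field of characteristic zero and let P ∈ K[x] be a polynomial such that the equation P(x) = 0 is solvable by radicals: there exists a chain of radical extensions K = R₀ ⊆ R₁ ⊆ … ⊆ Rₙ (each Rᵢ = R_{i−1}(aᵢ) with aᵢ^{kᵢ} ∈ R_{i−1}) and a field homomorphism from the splitting field E of P over K into Rₙ restricting to the identity on K. Then the Galois group G(E,K) of the splitting field E of P over K is a solvable group. -/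
/-!
Every step of a radical chain stays inside the field `solvableByRad K L` of elements solvable by
radicals, so `π` embeds `E` into it. In characteristic zero `E/K` is Galois, hence `E = K⟮α⟯` for a
primitive element `α`, and `E` is a splitting field of `minpoly K α = minpoly K (π α)`. Since
`π α` is solvable by radicals, the Galois group of that minimal polynomial is solvable.
-/

open Polynomial IntermediateField

theorem le_solvableByRad_of_radical_chain {K L : Type*} [Field K] [Field L] [Algebra K L]
    (n : ℕ) (R : ℕ → IntermediateField K L) (a : ℕ → L) (k : ℕ → ℕ)
    (hR0 : R 0 = ⊥)
    (hk : ∀ i, 1 ≤ i → i ≤ n → 0 < k i)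
    (hstep : ∀ i, 1 ≤ i → i ≤ n → R i = R (i - 1) ⊔ adjoin K {a i})
    (hrad : ∀ i, 1 ≤ i → i ≤ n → a i ^ k i ∈ R (i - 1)) :
    ∀ i ≤ n, R i ≤ solvableByRad K L := by
  intro i
  induction i with
  | zero => simp [hR0]
  | succ j ih =>
    intro hj
    have hRj := ih (by omega)
    have h1 : 1 ≤ j + 1 := by omega
    rw [hstep (j + 1) h1 hj, Nat.add_sub_cancel, sup_le_iff, adjoin_simple_le_iff]
    exact ⟨hRj, solvableByRad.rad_mem (hk _ h1 hj).ne' (hRj (hrad _ h1 hj))⟩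

theorem isSplittingField_minpoly_of_adjoin_eq_top {K E : Type*} [Field K] [Field E] [Algebra K E]
    [Normal K E] {α : E} (hα : K⟮α⟯ = ⊤) : IsSplittingField K E (minpoly K α) := by
  refine isSplittingField_iff_intermediateField.mpr ⟨Normal.splits inferInstance α, ?_⟩
  refine eq_top_iff.mpr (hα ▸ adjoin_simple_le_iff.mpr (subset_adjoin _ _ ?_))
  rw [mem_rootSet]
  exact ⟨minpoly.ne_zero (Algebra.IsIntegral.isIntegral α), minpoly.aeval K α⟩

theorem isSolvable_of_algHom_mem_solvableByRad {K E L : Type*} [Field K] [Field E] [Field L]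
    [Algebra K E] [Algebra K L] [FiniteDimensional K E] [IsGalois K E]
    (π : E →ₐ[K] L) (hπ : ∀ x, π x ∈ solvableByRad K L) : Group.IsSolvable Gal(E/K) := by
  obtain ⟨α, hα⟩ := Field.exists_primitive_element K E
  have := isSplittingField_minpoly_of_adjoin_eq_top hα
  have : Group.IsSolvable Gal((minpoly K α).SplittingField/K) := by
    rw [← minpoly.algHom_eq π π.injective α]
    exact isSolvable_gal_minpoly (hπ α)
  exact Group.isSolvable_of_isSolvable_injective
    (f := (IsSplittingField.algEquiv E (minpoly K α)).autCongr.toMonoidHom) (MulEquiv.injective _)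

/-- (Necessary condition for solvability by radicals.)  Let `K` be a
field of characteristic zero and `P ∈ K[x]` a polynomial whose equation `P(x) = 0` is
solvable by radicals: there is a chain of radical extensions
`K = R₀ ⊆ R₁ ⊆ … ⊆ Rₙ` (inside an extension `L` of `K`), where `Rᵢ = R_{i-1}(aᵢ)` with
`aᵢ^{kᵢ} ∈ R_{i-1}`, and a homomorphism `π` from the splitting field `E` of `P` over `K`
into `Rₙ` restricting to the identity on `K`.  Then the Galois group `G(E,K)` of the
splitting field `E` of `P` over `K` is solvable. -/
theorem solvable_galois_group_of_solvable_by_radicals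
    (K E L : Type) [Field K] [CharZero K] [Field E] [Field L]
    [Algebra K E] [Algebra K L]
    (P : Polynomial K) (hE : Polynomial.IsSplittingField K E P)
    (n : ℕ) (R : ℕ → IntermediateField K L) (a : ℕ → L) (k : ℕ → ℕ)
    (hR0 : R 0 = ⊥)
    (hk : ∀ i, 1 ≤ i → i ≤ n → 0 < k i)
    (hstep : ∀ i, 1 ≤ i → i ≤ n → R i = R (i - 1) ⊔ IntermediateField.adjoin K {a i})
    (hrad : ∀ i, 1 ≤ i → i ≤ n → a i ^ k i ∈ R (i - 1))
    (π : E →ₐ[K] L) (hπ : ∀ x : E, π x ∈ R n) :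
    IsSolvable (E ≃ₐ[K] E) := by
  have hRn := le_solvableByRad_of_radical_chain n R a k hR0 hk hstep hrad n le_rfl
  have : FiniteDimensional K E := hE.finiteDimensional E P
  have : Normal K E := Normal.of_isSplittingField P
  have : IsGalois K E := ⟨⟩
  exact isSolvable_of_algHom_mem_solvableByRad π fun x => hRn (hπ x)
end
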